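/- There exists a Hadamard group matrix over the non-abelian group ℍ × C₂, where ℍ is the quaternion group of order 8: there exists f : QuaternionGroup 2 × ZMod 2 → ℤ taking only the values 1 and −1 such that the matrix M indexed by QuaternionGroup 2 × ZMod 2 with M g h = f (g⁻¹ * h) satisfies M * Mᵀ = (16 : ℤ) • 1. -/

import Mathlib

/-!
Grouping `f (g⁻¹ * k) * f (h⁻¹ * k)` by `u = g⁻¹ * k` shows that the `(g, h)` entry of `M * Mᵀ`
is the autocorrelation `∑ u, f u * f (h⁻¹ * g * u)` of `f` at `h⁻¹ * g`. For a `±1`-valued `f`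
the autocorrelation at `1` is the group order, so `M` is Hadamard exactly when every other
autocorrelation vanishes, i.e. when `{u | f u = 1}` is a Menon difference set. In `Q₈ × C₂` the
six elements `(1,0), (a²,0), (1,1), (a,1), (x,0), (xa,0)` form a `(16, 6, 2)` difference set,
which is checked by computation.
-/

open Matrix

section GroupMatrix

variable {G R : Type*} [Group G] [Fintype G]

def groupMatrix (f : G → R) : Matrix G G R :=
  Matrix.of fun g h => f (g⁻¹ * h)

def autocorrelation [Mul R] [AddCommMonoid R] (f : G → R) (t : G) : R :=
  ∑ u, f u * f (t * u)

theorem groupMatrix_mul_transpose_apply [CommSemiring R] (f : G → R) (g h : G) :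
    (groupMatrix f * (groupMatrix f)ᵀ) g h = autocorrelation f (h⁻¹ * g) := by
  simp only [mul_apply, transpose_apply, groupMatrix, of_apply, autocorrelation]
  rw [← Equiv.sum_comp (Equiv.mulLeft g)]
  simp [mul_assoc]

theorem groupMatrix_mul_transpose_eq_smul_one [CommSemiring R] [DecidableEq G] {f : G → R}
    {n : R} (h_one : autocorrelation f 1 = n) (h_ne : ∀ t ≠ 1, autocorrelation f t = 0) :
    groupMatrix f * (groupMatrix f)ᵀ = n • (1 : Matrix G G R) := by
  ext g h
  rw [groupMatrix_mul_transpose_apply, Matrix.smul_apply, one_apply]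
  by_cases hgh : g = h
  · simp [hgh, h_one]
  · have : h⁻¹ * g ≠ 1 := fun e => hgh (inv_mul_eq_one.mp e).symm
    simp [hgh, h_ne _ this]

theorem autocorrelation_one_eq_card [CommRing R] {f : G → R} (hf : ∀ g, f g = 1 ∨ f g = -1) :
    autocorrelation f 1 = Fintype.card G := by
  have hsq : ∀ u, f u * f u = 1 := fun u => by rcases hf u with h | h <;> simp [h]
  simp [autocorrelation, hsq]

end GroupMatrix

def quaternionC2DifferenceSet : Finset (QuaternionGroup 2 × ZMod 2) :=
  {(.a 0, 0), (.a 2, 0), (.a 0, 1), (.a 1, 1), (.xa 0, 0), (.xa 1, 0)}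

def quaternionC2Sequence (u : QuaternionGroup 2 × ZMod 2) : ℤ :=
  if u ∈ quaternionC2DifferenceSet then 1 else -1

def quaternionC2MulEquiv :
    QuaternionGroup 2 × ZMod 2 ≃ QuaternionGroup 2 × Multiplicative (ZMod 2) :=
  (Equiv.refl _).prodCongr Multiplicative.ofAdd

theorem autocorrelation_quaternionC2Sequence_eq_zero :
    ∀ t ≠ 1, autocorrelation (quaternionC2Sequence ∘ quaternionC2MulEquiv.symm) t = 0 := by
  decide

/-- There exists a Hadamard group matrix over the non-abelian group `ℍ × C₂`, where
`ℍ = QuaternionGroup 2` is the quaternion group of order `8`. The group matrix of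
`f` has entry `f (g⁻¹ * h)` at `(g, h)` (the second, cyclic, factor written
additively). -/
theorem exists_hadamard_group_matrix_quaternion_C2 :
    ∃ f : QuaternionGroup 2 × ZMod 2 → ℤ, (∀ g, f g = 1 ∨ f g = -1) ∧
      ∃ M : Matrix (QuaternionGroup 2 × ZMod 2) (QuaternionGroup 2 × ZMod 2) ℤ,
        (∀ g h, M g h = f (g.1⁻¹ * h.1, h.2 - g.2)) ∧
          M * M.transpose = (16 : ℤ) • 1 := by
  set e := quaternionC2MulEquiv
  set f := quaternionC2Sequence
  have hf : ∀ g, f g = 1 ∨ f g = -1 := fun _ => ite_eq_or_eq _ _ _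
  have h_one : autocorrelation (f ∘ e.symm) 1 = 16 := by
    rw [autocorrelation_one_eq_card (f := f ∘ e.symm) fun g => hf _]
    simp [QuaternionGroup.card]
  refine ⟨f, hf, (groupMatrix (f ∘ e.symm)).submatrix e e, fun g h => ?_, ?_⟩
  · rw [sub_eq_neg_add]
    rfl
  · rw [transpose_submatrix, submatrix_mul_equiv,
      groupMatrix_mul_transpose_eq_smul_one h_one autocorrelation_quaternionC2Sequence_eq_zero,
      submatrix_smul, Pi.smul_apply, Pi.smul_apply, submatrix_one_equiv]
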